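/- arXiv:1707.04229 — 5 statements merged into one kernel-verified Lean document; each statement's English description precedes it below -/
import Mathlib

section
/- There exist absolute constants c > 0 such that for every sufficiently large n, the 3-uniform Ramsey number of S_n satisfies r_3(S_n, S_n) ≤ r_3(S_{2^{cn}, n}, S_{2^{cn}, n}) < 2^{3n^2}. In particular, r_3(S_n, S_n) < 2^{3n^2} for all sufficiently large n. -/
open Filter

/-- A monochromatic copy of `S_{a,b}` in color `col`: disjoint sets `U, V` with `|U| = a`,
`|V| = b`, such that every triple `{x,y,z}` with `x ∈ U` and `y, z ∈ V` distinct has color `col`. -/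
def hasSab {N : ℕ} (χ : Finset (Fin N) → Bool) (col : Bool) (a b : ℕ) : Prop :=
  ∃ U V : Finset (Fin N), Disjoint U V ∧ U.card = a ∧ V.card = b ∧
    ∀ x ∈ U, ∀ y ∈ V, ∀ z ∈ V, y ≠ z → χ {x, y, z} = col

/-- The Ramsey number `r_3(S_{a,b}, S_{a,b})`. -/
noncomputable def rS (a b : ℕ) : ℕ :=
  sInf {N | ∀ χ : Finset (Fin N) → Bool, hasSab χ true a b ∨ hasSab χ false a b}

/-!
Fix a set `T` of `m = C(2n, n)` vertices. For each vertex `x ∉ T`, the link colouring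
`{y, z} ↦ χ {x, y, z}` of pairs in `T` has, by the Erdős–Szekeres bound
`r(p, q) ≤ C(p + q, p)`, a monochromatic `n`-set `V_x ⊆ T`. There are only
`2 C(m, n) ≤ 2^(2n² + 1)` possible pairs (`V_x`, colour), so among `2^(3n²)` vertices some `2^n`
of them share the same pair, and together with `V_x` they span a monochromatic `S_{2^n, n}`.
Hence `c = 1` works for `n ≥ 2`.
-/

open Finset

section MonochromaticSubset

variable {α : Type*}

def HasMonochromaticSubset (g : α → α → Bool) (col : Bool) (k : ℕ) (S : Finset α) : Prop :=
  ∃ V ⊆ S, #V = k ∧ (V : Set α).Pairwise fun y z => g y z = col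

lemma hasMonochromaticSubset_zero (g : α → α → Bool) (col : Bool) (S : Finset α) :
    HasMonochromaticSubset g col 0 S :=
  ⟨∅, empty_subset S, card_empty, by simp⟩

lemma HasMonochromaticSubset.mono {g : α → α → Bool} {col : Bool} {k : ℕ} {S T : Finset α}
    (h : HasMonochromaticSubset g col k S) (hST : S ⊆ T) : HasMonochromaticSubset g col k T :=
  let ⟨V, hVS, hV⟩ := h
  ⟨V, hVS.trans hST, hV⟩

lemma HasMonochromaticSubset.succ_of_filter [DecidableEq α] {g : α → α → Bool}
    (hg : ∀ y z, g y z = g z y) {col : Bool} {k : ℕ} {S : Finset α} {v : α} (hv : v ∈ S)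
    (h : HasMonochromaticSubset g col k {w ∈ S.erase v | g v w = col}) :
    HasMonochromaticSubset g col (k + 1) S := by
  obtain ⟨V, hVS, hVk, hV⟩ := h
  have hvV : v ∉ V := fun hvV => by simpa using hVS hvV
  refine ⟨insert v V, insert_subset hv (hVS.trans ((filter_subset _ _).trans (erase_subset _ _))),
    by rw [card_insert_of_notMem hvV, hVk], ?_⟩
  rw [coe_insert]
  refine hV.insert fun w hw _ => ?_
  have hvw : g v w = col := (mem_filter.mp (hVS hw)).2
  exact ⟨hvw, hg w v ▸ hvw⟩

theorem hasMonochromaticSubset_of_choose_le [DecidableEq α] {g : α → α → Bool}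
    (hg : ∀ y z, g y z = g z y) (p q : ℕ) (S : Finset α) (hS : (p + q).choose p ≤ #S) :
    HasMonochromaticSubset g true p S ∨ HasMonochromaticSubset g false q S := by
  induction p generalizing q S with
  | zero => exact .inl (hasMonochromaticSubset_zero g true S)
  | succ p ihp =>
  induction q generalizing S with
  | zero => exact .inr (hasMonochromaticSubset_zero g false S)
  | succ q ihq =>
  obtain ⟨v, hv⟩ : S.Nonempty :=
    card_pos.mp ((Nat.choose_pos (by omega)).trans_le hS)
  set T : Bool → Finset α := fun col => {w ∈ S.erase v | g v w = col}
  have hT : #(T true) + #(T false) + 1 = #S := by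
    rw [← card_erase_add_one hv, ← card_filter_add_card_filter_not (s := S.erase v)
      (fun w => g v w = true)]
    simp only [T, Bool.not_eq_true]
  have hpascal : (p + 1 + (q + 1)).choose (p + 1)
      = (p + (q + 1)).choose p + (p + 1 + q).choose (p + 1) := by
    rw [show p + 1 + (q + 1) = p + (q + 1) + 1 by omega, Nat.choose_succ_succ,
      show p + (q + 1) = p + 1 + q by omega]
  by_cases htrue : (p + (q + 1)).choose p ≤ #(T true)
  · refine (ihp (q + 1) (T true) htrue).imp (·.succ_of_filter hg hv) (·.mono ?_)
    exact (filter_subset _ _).trans (erase_subset _ _)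
  · refine (ihq (T false) (by omega)).imp (·.mono ?_) (·.succ_of_filter hg hv)
    exact (filter_subset _ _).trans (erase_subset _ _)

end MonochromaticSubset

lemma hasSab.mono_left {N : ℕ} {χ : Finset (Fin N) → Bool} {col : Bool} {a a' b : ℕ}
    (h : hasSab χ col a b) (ha : a' ≤ a) : hasSab χ col a' b := by
  obtain ⟨U, V, hUV, hU, hV, hχ⟩ := h
  obtain ⟨U', hU'U, hU'⟩ := exists_subset_card_eq (hU ▸ ha)
  exact ⟨U', V, hUV.mono_left hU'U, hU', hV, fun x hx => hχ x (hU'U hx)⟩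

lemma exists_hasSab_of_link {N : ℕ} (χ : Finset (Fin N) → Bool) {a n : ℕ}
    (T : Finset (Fin N)) (hnT : n ≤ #T) (hN : #T + (#T).choose n * 2 * a ≤ N)
    (hlink : ∀ x, ∃ col, HasMonochromaticSubset (fun y z => χ {x, y, z}) col n T) :
    ∃ col, hasSab χ col a n := by
  choose col V hVT hVn hV using hlink
  have hmaps : ∀ x ∈ univ \ T, (V x, col x) ∈ T.powersetCard n ×ˢ (univ : Finset Bool) :=
    fun x _ => mem_product.mpr ⟨mem_powersetCard.mpr ⟨hVT x, hVn x⟩, mem_univ _⟩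
  have hcard : #(T.powersetCard n ×ˢ (univ : Finset Bool)) * a ≤ #(univ \ T) := by
    rw [card_product, card_powersetCard, card_univ_sdiff, card_univ, Fintype.card_fin,
      Fintype.card_bool]
    omega
  obtain ⟨⟨W, c⟩, hWc, hfiber⟩ := exists_le_card_fiber_of_mul_le_card_of_maps_to hmaps
    ((powersetCard_nonempty.mpr hnT).product univ_nonempty) hcard
  obtain ⟨U, hU, hUa⟩ := exists_subset_card_eq hfiber
  obtain ⟨⟨hWT, hWn⟩, -⟩ := mem_product.mp hWc |>.imp_left mem_powersetCard.mp
  have hUV (x) (hx : x ∈ U) : x ∉ T ∧ V x = W ∧ col x = c := by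
    obtain ⟨hxT, hxWc⟩ := mem_filter.mp (hU hx)
    exact ⟨(mem_sdiff.mp hxT).2, Prod.ext_iff.mp hxWc⟩
  refine ⟨c, U, W, disjoint_left.mpr fun x hx hxW => (hUV x hx).1 (hWT hxW), hUa, hWn, ?_⟩
  intro x hx y hy z hz hyz
  obtain ⟨-, rfl, rfl⟩ := hUV x hx
  exact hV x hy hz hyz

theorem hasSab_or_hasSab_of_le {N a n : ℕ}
    (hN : n.centralBinom + n.centralBinom.choose n * 2 * a ≤ N)
    (χ : Finset (Fin N) → Bool) : hasSab χ true a n ∨ hasSab χ false a n := by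
  obtain ⟨T, -, hT⟩ := exists_subset_card_eq (s := (univ : Finset (Fin N)))
    (n := n.centralBinom) (by rw [card_univ, Fintype.card_fin]; omega)
  have hlink (x : Fin N) : ∃ col, HasMonochromaticSubset (fun y z => χ {x, y, z}) col n T := by
    have hsymm : ∀ y z, χ {x, y, z} = χ {x, z, y} := fun y z => by rw [pair_comm]
    rcases hasMonochromaticSubset_of_choose_le hsymm n n T
      (by rw [hT, Nat.centralBinom_eq_two_mul_choose, two_mul]) with h | h
    exacts [⟨true, h⟩, ⟨false, h⟩]
  have hnT : n ≤ #T := by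
    have := Nat.choose_le_centralBinom 1 n
    rw [Nat.choose_one_right] at this
    omega
  obtain ⟨_ | _, h⟩ := exists_hasSab_of_link χ T hnT (hT ▸ hN) hlink
  exacts [.inr h, .inl h]

lemma rS_le {a b N : ℕ}
    (h : ∀ χ : Finset (Fin N) → Bool, hasSab χ true a b ∨ hasSab χ false a b) :
    rS a b ≤ N :=
  Nat.sInf_le h

lemma rS_mono_left {a a' b N : ℕ} (ha : a' ≤ a)
    (h : ∀ χ : Finset (Fin N) → Bool, hasSab χ true a b ∨ hasSab χ false a b) :
    rS a' b ≤ rS a b := by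
  have hrS : ∀ χ : Finset (Fin (rS a b)) → Bool, hasSab χ true a b ∨ hasSab χ false a b :=
    Nat.sInf_mem (s := {M | ∀ χ : Finset (Fin M) → Bool,
      hasSab χ true a b ∨ hasSab χ false a b}) ⟨N, h⟩
  exact rS_le fun χ => (hrS χ).imp (·.mono_left ha) (·.mono_left ha)

lemma centralBinom_add_choose_mul_lt {n : ℕ} (hn : 2 ≤ n) :
    n.centralBinom + n.centralBinom.choose n * 2 * 2 ^ n < 2 ^ (3 * n ^ 2) := by
  have hm : n.centralBinom ≤ 2 ^ (2 * n) := pow_mul 2 2 n ▸ Nat.centralBinom_le_four_pow n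
  have hmn : n.centralBinom.choose n ≤ 2 ^ (2 * n ^ 2) :=
    calc _ ≤ n.centralBinom ^ n := Nat.choose_le_pow _ _
      _ ≤ (2 ^ (2 * n)) ^ n := Nat.pow_le_pow_left hm n
      _ = 2 ^ (2 * n ^ 2) := by rw [← pow_mul]; ring_nf
  calc n.centralBinom + n.centralBinom.choose n * 2 * 2 ^ n
      ≤ 2 ^ (2 * n) + 2 ^ (2 * n ^ 2 + n + 1) := by
        rw [pow_add, pow_add, pow_one, mul_right_comm]
        gcongr
    _ < 2 ^ (2 * n ^ 2 + n + 1) + 2 ^ (2 * n ^ 2 + n + 1) := by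
        gcongr
        · norm_num
        · nlinarith
    _ = 2 ^ (2 * n ^ 2 + n + 2) := by ring
    _ ≤ 2 ^ (3 * n ^ 2) := Nat.pow_le_pow_right two_pos (by nlinarith)

theorem stmt_0 :
    ∃ c : ℝ, 0 < c ∧ ∀ᶠ n : ℕ in atTop,
      rS n n ≤ rS (⌊(2:ℝ) ^ (c * n)⌋₊) n ∧
      rS (⌊(2:ℝ) ^ (c * n)⌋₊) n < 2 ^ (3 * n ^ 2) := by
  refine ⟨1, one_pos, ?_⟩
  filter_upwards [eventually_ge_atTop 2] with n hn
  have hfloor : ⌊(2:ℝ) ^ ((1:ℝ) * n)⌋₊ = 2 ^ n := by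
    rw [one_mul, Real.rpow_natCast, ← Nat.cast_ofNat, ← Nat.cast_pow, Nat.floor_natCast]
  rw [hfloor]
  have hramsey := hasSab_or_hasSab_of_le (n := n) (a := 2 ^ n) le_rfl
  exact ⟨rS_mono_left Nat.lt_two_pow_self.le hramsey,
    (rS_le hramsey).trans_lt (centralBinom_add_choose_mul_lt hn)⟩
end

section
/- For every n ≥ 1, r_3(S_{1,n}, S_{1,n}) ≤ 1 + r_2(n,n), and consequently r_3(S_{1,n}, S_{1,n}) < 4^n. -/
/-!
Taking a vertex `x` as the apex, a 3-uniform coloring induces a 2-coloring of the pairs of the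
remaining vertices (the link of `x`: `{y, z}` gets the color of `{x, y, z}`), and a monochromatic
`n`-clique in the link together with `x` is a monochromatic `S_{1,n}`. The Erdős–Szekeres
argument gives `r_2(n, n) ≤ binom(2n - 2, n - 1) ≤ 4^(n - 1)`.
-/

/-- A monochromatic clique of size `n` in color `c` for a coloring of `k`-subsets. -/
def monoClique (k : ℕ) {N : ℕ} (χ : Finset (Fin N) → Bool) (c : Bool) (n : ℕ) : Prop :=
  ∃ S : Finset (Fin N), S.card = n ∧ ∀ e : Finset (Fin N), e ⊆ S → e.card = k → χ e = c

/-- The classical Ramsey number `r_k(s, n)`. -/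
noncomputable def ramsey (k s n : ℕ) : ℕ :=
  sInf {N | ∀ χ : Finset (Fin N) → Bool, monoClique k χ true s ∨ monoClique k χ false n}

open Finset

namespace SimpleGraph

theorem exists_isNClique_or_isNClique_compl_of_choose_le {α : Type*} (G : SimpleGraph α) :
    ∀ (s t : ℕ) (A : Finset α), (s + t).choose s ≤ #A →
      (∃ S ⊆ A, G.IsNClique (s + 1) S) ∨ ∃ S ⊆ A, Gᶜ.IsNClique (t + 1) S := by
  classical
  intro s
  induction s with
  | zero =>
    intro t A hA
    obtain ⟨v, hv⟩ : A.Nonempty := card_pos.mp (by simpa using hA)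
    exact Or.inl ⟨{v}, by simpa using hv, isNClique_singleton.mpr rfl⟩
  | succ s ihs =>
    intro t
    induction t with
    | zero =>
      intro A hA
      obtain ⟨v, hv⟩ : A.Nonempty := card_pos.mp (by simpa using hA)
      exact Or.inr ⟨{v}, by simpa using hv, isNClique_singleton.mpr rfl⟩
    | succ t iht =>
      intro A hA
      obtain ⟨v, hv⟩ : A.Nonempty := card_pos.mp (hA.trans_lt' (Nat.choose_pos (by omega)))
      set adj := (A.erase v).filter (G.Adj v)
      set nonadj := (A.erase v).filter (¬ G.Adj v ·)
      have hadj : adj ⊆ A := (filter_subset _ _).trans (erase_subset _ _)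
      have hnonadj : nonadj ⊆ A := (filter_subset _ _).trans (erase_subset _ _)
      have hsplit : (s + t + 1).choose s ≤ #adj ∨ (s + 1 + t).choose (s + 1) ≤ #nonadj := by
        have hpart : #adj + #nonadj = #A - 1 := by
          rw [← card_erase_of_mem hv]
          exact card_filter_add_card_filter_not _
        have hpascal := Nat.choose_succ_succ' (s + t + 1) s
        rw [show s + 1 + (t + 1) = s + t + 1 + 1 by omega] at hA
        rw [show s + 1 + t = s + t + 1 by omega]
        omega
      rcases hsplit with h | h
      · rcases ihs (t + 1) adj h with ⟨S, hSA, hS⟩ | ⟨S, hSA, hS⟩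
        · refine Or.inl ⟨insert v S, insert_subset hv (hSA.trans hadj), hS.insert ?_⟩
          intro u hu
          exact (mem_filter.mp (hSA hu)).2
        · exact Or.inr ⟨S, hSA.trans hadj, hS⟩
      · rcases iht nonadj h with ⟨S, hSA, hS⟩ | ⟨S, hSA, hS⟩
        · exact Or.inl ⟨S, hSA.trans hnonadj, hS⟩
        · refine Or.inr ⟨insert v S, insert_subset hv (hSA.trans hnonadj), hS.insert ?_⟩
          intro u hu
          obtain ⟨hu, hnadj⟩ := mem_filter.mp (hSA hu)
          exact (compl_adj G v u).mpr ⟨(ne_of_mem_erase hu).symm, hnadj⟩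

end SimpleGraph

section PairColoring

variable {α : Type*} [DecidableEq α]

@[simps]
def pairColorGraph (χ : Finset α → Bool) (c : Bool) : SimpleGraph α where
  Adj x y := x ≠ y ∧ χ {x, y} = c
  symm.symm x y h := ⟨h.1.symm, by rw [pair_comm]; exact h.2⟩
  loopless.irrefl _ h := h.1 rfl

theorem compl_pairColorGraph (χ : Finset α → Bool) (c : Bool) :
    (pairColorGraph χ c)ᶜ = pairColorGraph χ (!c) := by
  ext x y
  cases c <;> simp [SimpleGraph.compl_adj] <;> tauto

end PairColoring

theorem monoClique_two_of_isNClique {N n : ℕ} {χ : Finset (Fin N) → Bool} {c : Bool}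
    {S : Finset (Fin N)} (h : (pairColorGraph χ c).IsNClique n S) : monoClique 2 χ c n := by
  refine ⟨S, h.card_eq, fun e he he2 ↦ ?_⟩
  obtain ⟨x, y, hxy, rfl⟩ := card_eq_two.mp he2
  exact (h.isClique (he (mem_insert_self x {y})) (he (mem_insert_of_mem (mem_singleton_self y)))
    hxy).2

theorem monoClique_two_of_choose_le {N s t : ℕ} (hN : (s + t).choose s ≤ N)
    (χ : Finset (Fin N) → Bool) : monoClique 2 χ true (s + 1) ∨ monoClique 2 χ false (t + 1) := by
  have h := (pairColorGraph χ true).exists_isNClique_or_isNClique_compl_of_choose_le s t univ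
    (by simpa using hN)
  rw [compl_pairColorGraph] at h
  exact h.imp (fun ⟨_, _, hS⟩ ↦ monoClique_two_of_isNClique hS)
    (fun ⟨_, _, hS⟩ ↦ monoClique_two_of_isNClique hS)

theorem ramsey_two_le_choose (s t : ℕ) : ramsey 2 (s + 1) (t + 1) ≤ (s + t).choose s :=
  Nat.sInf_le fun χ ↦ monoClique_two_of_choose_le le_rfl χ

theorem monoClique_two_of_ramsey (s t : ℕ) (χ : Finset (Fin (ramsey 2 (s + 1) (t + 1))) → Bool) :
    monoClique 2 χ true (s + 1) ∨ monoClique 2 χ false (t + 1) :=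
  Nat.sInf_mem (s := {N | ∀ χ : Finset (Fin N) → Bool,
    monoClique 2 χ true (s + 1) ∨ monoClique 2 χ false (t + 1)})
    ⟨_, fun χ ↦ monoClique_two_of_choose_le le_rfl χ⟩ χ

def link {N : ℕ} (χ : Finset (Fin (N + 1)) → Bool) (e : Finset (Fin N)) : Bool :=
  χ (insert (Fin.last N) (e.map Fin.castSuccEmb))

theorem hasSab_one_of_monoClique_link {N n : ℕ} {χ : Finset (Fin (N + 1)) → Bool} {c : Bool}
    (h : monoClique 2 (link χ) c n) : hasSab χ c 1 n := by
  obtain ⟨S, hcard, hS⟩ := h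
  refine ⟨{Fin.last N}, S.map Fin.castSuccEmb, ?_, card_singleton _, by simpa using hcard, ?_⟩
  · simp [Fin.castSucc_ne_last]
  · intro x hx y hy z hz hyz
    obtain rfl := mem_singleton.mp hx
    obtain ⟨y, hy, rfl⟩ := mem_map.mp hy
    obtain ⟨z, hz, rfl⟩ := mem_map.mp hz
    have hyz : y ≠ z := fun h ↦ hyz (h ▸ rfl)
    rw [mem_map' Fin.castSuccEmb] at hy hz
    simpa [link] using hS {y, z} (insert_subset hy (singleton_subset_iff.mpr hz)) (card_pair hyz)

theorem rS_one_le_succ {N n : ℕ}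
    (hN : ∀ χ : Finset (Fin N) → Bool, monoClique 2 χ true n ∨ monoClique 2 χ false n) :
    rS 1 n ≤ N + 1 :=
  Nat.sInf_le fun χ ↦ (hN (link χ)).imp hasSab_one_of_monoClique_link hasSab_one_of_monoClique_link

theorem stmt_1 : ∀ n : ℕ, 1 ≤ n →
    rS 1 n ≤ 1 + ramsey 2 n n ∧ rS 1 n < 4 ^ n := by
  intro n hn
  obtain ⟨m, rfl⟩ : ∃ m, n = m + 1 := ⟨n - 1, by omega⟩
  have hS : rS 1 (m + 1) ≤ 1 + ramsey 2 (m + 1) (m + 1) := by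
    rw [add_comm 1]
    exact rS_one_le_succ (monoClique_two_of_ramsey m m)
  have hR : ramsey 2 (m + 1) (m + 1) ≤ 4 ^ m :=
    calc ramsey 2 (m + 1) (m + 1) ≤ (m + m).choose m := ramsey_two_le_choose m m
      _ ≤ 2 ^ (m + m) := Nat.choose_le_two_pow _ _
      _ = 4 ^ m := by rw [← two_mul, pow_mul]; norm_num
  refine ⟨hS, hS.trans_lt ?_⟩
  have : 0 < 4 ^ m := by positivity
  rw [pow_succ]
  omega
end

section
/- Let k ≥ 2 and s ≥ k + 1, and set q = s − k + 1. Then for every n, r_{k−1}(⌊n/q⌋; q) ≤ r̄_k(P_s, n) ≤ r_{k−1}(n; q). -/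
/-- A monochromatic clique of size `n` in color `c` for a `q`-coloring of `k`-subsets. -/
def monoCliqueC (k : ℕ) {N q : ℕ} (χ : Finset (Fin N) → Fin q) (c : Fin q) (n : ℕ) : Prop :=
  ∃ S : Finset (Fin N), S.card = n ∧ ∀ e : Finset (Fin N), e ⊆ S → e.card = k → χ e = c

/-- The multicolor Ramsey number `r_k(n; q)`. -/
noncomputable def ramseyMulti (k n q : ℕ) : ℕ :=
  sInf {N | ∀ χ : Finset (Fin N) → Fin q, ∃ c : Fin q, monoCliqueC k χ c n}

/-- An ordered (monotone) copy of the tight path `P_s^{(k)}` in color `col`: a set `S` of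
`s` vertices such that every window of `k` consecutive vertices (in increasing order)
forms an edge of color `col`. -/
def hasTightPath (k s : ℕ) {N : ℕ} (χ : Finset (Fin N) → Bool) (col : Bool) : Prop :=
  ∃ S : Finset (Fin N), S.card = s ∧
    ∀ i : ℕ, i + k ≤ s → χ ((((S.sort (· ≤ ·)).drop i).take k).toFinset) = col

/-- The ordered Ramsey number `r̄_k(P_s, n)` of the tight path versus a clique. -/
noncomputable def rbar (k s n : ℕ) : ℕ :=
  sInf {N | ∀ χ : Finset (Fin N) → Bool, hasTightPath k s χ true ∨ monoClique k χ false n}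

/-!
Write `K = k - 1` and `q = s - k + 1`.

Upper bound: colour a `K`-set `e` by the number of vertices preceding `e` on a longest red
tight path ending with `e`, capped at `q - 1`. If `E` is a red `k`-set inside a monochromatic
set of this colouring, the longest path ending with the lower face of `E` (all but its maximum)
extends by `max E` to a path ending with the upper face (all but its minimum); equal capped
colours then force the cap, i.e. a red `P_s`. Otherwise the monochromatic set is a blue clique.

Lower bound: given a `q`-colouring `φ` of `K`-sets, colour a `k`-set red when `φ` increases from
its lower to its upper face. A red `P_s` would carry `q + 1` strictly increasing colours. On a
blue clique `φ` can only decrease from a `K`-set to one lying entirely above it, so if none of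
`q` consecutive blocks of size `⌊n/q⌋` were monochromatic, the colours would strictly decrease
`q` times.

The Ramsey numbers `r_K(n; q)` are finite by the Erdős–Rado argument: greedily find a set on which
the colour of a `(K+1)`-set is unchanged when its minimum is replaced by a fixed vertex `b`, and
apply the `K`-uniform theorem to `e ↦ χ (insert b e)`.
-/

open Finset

section ErdosRado

variable {α C : Type*} [LinearOrder α]

def IsMinHomogeneous (χ : Finset α → C) (K : ℕ) (A X : Finset α) : Prop :=
  ∀ a ∈ A, ∀ e ⊆ A, e.card = K → (∀ x ∈ e, a < x) → ∀ y ∈ X, χ (insert a e) = χ (insert y e)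

lemma IsMinHomogeneous.mono {χ : Finset α → C} {K : ℕ} {A X Y : Finset α}
    (h : IsMinHomogeneous χ K A X) (hYX : Y ⊆ X) : IsMinHomogeneous χ K A Y :=
  fun a ha e he heK hae y hy => h a ha e he heK hae y (hYX hy)

lemma exists_isMinHomogeneous_insert [Fintype C] {χ : Finset α → C} {K m : ℕ} {A X : Finset α}
    (hAX : ∀ a ∈ A, ∀ x ∈ X, x < a) (h : IsMinHomogeneous χ K A X)
    (hX : Fintype.card C ^ A.card.choose K * (m + 1) ≤ X.card) :
    ∃ a ∈ X, ∃ X' ⊆ X, m ≤ X'.card ∧ (∀ b ∈ insert a A, ∀ x ∈ X', x < b) ∧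
      IsMinHomogeneous χ K (insert a A) X' := by
  classical
  have : Nonempty C := ⟨χ ∅⟩
  -- pigeonhole on the whole profile `e ↦ χ (insert x e)` over the `K`-subsets `e` of `A`
  let F : α → (A.powersetCard K → C) := fun x e => χ (insert x e)
  obtain ⟨f, -, hf⟩ := exists_le_card_fiber_of_mul_le_card_of_maps_to (f := F)
    (fun x _ => mem_univ (F x)) univ_nonempty
    (by rwa [card_univ, Fintype.card_fun, Fintype.card_coe, card_powersetCard])
  set X₁ := X.filter (fun x => F x = f)
  have hX₁ : X₁.Nonempty := card_pos.mp (by omega)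
  set a := X₁.max' hX₁
  have haX₁ : a ∈ X₁ := max'_mem X₁ hX₁
  have haX : a ∈ X := (mem_filter.mp haX₁).1
  have hsub : ∀ b, a ≤ b → ∀ e ⊆ insert a A, (∀ x ∈ e, b < x) → e ⊆ A := fun b hab e he hbe =>
    (subset_insert_iff_of_notMem fun hae => (hab.trans_lt (hbe a hae)).false).mp he
  refine ⟨a, haX, X₁.erase a, (erase_subset a X₁).trans (filter_subset _ X), ?_, ?_, ?_⟩
  · rw [card_erase_of_mem haX₁]
    omega
  · intro b hb x hx
    have hxa : x < a := lt_of_le_of_ne (le_max' X₁ x (mem_of_mem_erase hx)) (ne_of_mem_erase hx)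
    rcases mem_insert.mp hb with rfl | hb
    · exact hxa
    · exact hAX b hb x (filter_subset _ X (mem_of_mem_erase hx))
  · intro b hb e he heK hbe y hy
    have hyX₁ : y ∈ X₁ := mem_of_mem_erase hy
    rcases mem_insert.mp hb with rfl | hbA
    · have heA : e ∈ A.powersetCard K := mem_powersetCard.mpr ⟨hsub a le_rfl e he hbe, heK⟩
      have hFy : F y = F a := (mem_filter.mp hyX₁).2.trans (mem_filter.mp haX₁).2.symm
      exact (congrFun hFy ⟨e, heA⟩).symm
    · exact h b hbA e (hsub b (hAX b hbA a haX).le e he hbe) heK hbe y (filter_subset _ X hyX₁)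

/-- A reservoir of this size lets `t` more vertices be added to a min-homogeneous set of size
`a`: each step divides the reservoir by the number `q ^ a.choose K` of colour profiles. -/
def minHomogeneousBound (q K : ℕ) : ℕ → ℕ → ℕ
  | _, 0 => 1
  | a, t + 1 => q ^ a.choose K * (minHomogeneousBound q K (a + 1) t + 1)

lemma exists_isMinHomogeneous [Fintype C] (χ : Finset α → C) (K t : ℕ) {A X : Finset α}
    (hAX : ∀ a ∈ A, ∀ x ∈ X, x < a) (h : IsMinHomogeneous χ K A X)
    (hX : minHomogeneousBound (Fintype.card C) K A.card t ≤ X.card) :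
    ∃ A' ⊆ A ∪ X, A'.card = A.card + t ∧ ∃ b ∈ X, IsMinHomogeneous χ K A' {b} := by
  classical
  induction t generalizing A X with
  | zero =>
    obtain ⟨b, hb⟩ := card_pos.mp (by simpa [minHomogeneousBound] using hX)
    exact ⟨A, subset_union_left, rfl, b, hb, h.mono (singleton_subset_iff.mpr hb)⟩
  | succ t ih =>
    obtain ⟨a, haX, X', hX'X, hX', hAX', h'⟩ := exists_isMinHomogeneous_insert hAX h hX
    have haA : a ∉ A := fun haA => (hAX a haA a haX).false
    obtain ⟨A', hA', hcard, b, hb, hA'b⟩ := ih hAX' h' (by rwa [card_insert_of_notMem haA])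
    refine ⟨A', fun x hx => ?_, by rw [hcard, card_insert_of_notMem haA]; ring, b, hX'X hb, hA'b⟩
    rcases mem_union.mp (hA' hx) with hx | hx
    · rcases mem_insert.mp hx with rfl | hx
      · exact mem_union_right A haX
      · exact mem_union_left X hx
    · exact mem_union_right A (hX'X hx)

end ErdosRado

theorem exists_monochromatic_subset (C : Type*) [Fintype C] (K n : ℕ) :
    ∃ N, ∀ {α : Type} [LinearOrder α] (V : Finset α), N ≤ V.card → ∀ χ : Finset α → C,
      ∃ c, ∃ S ⊆ V, S.card = n ∧ ∀ e ⊆ S, e.card = K → χ e = c := by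
  induction K generalizing n with
  | zero =>
    refine ⟨n, fun V hV χ => ?_⟩
    obtain ⟨S, hSV, hS⟩ := exists_subset_card_eq hV
    exact ⟨χ ∅, S, hSV, hS, fun e _ he => by rw [card_eq_zero.mp he]⟩
  | succ K ih =>
    obtain ⟨T, hT⟩ := ih n
    refine ⟨minHomogeneousBound (Fintype.card C) K 0 T, fun {α} _ V hV χ => ?_⟩
    obtain ⟨A, hAV, hA, b, -, hAb⟩ := exists_isMinHomogeneous χ K T (A := ∅) (X := V)
      (by simp) (by simp [IsMinHomogeneous]) hV
    obtain ⟨c, S, hSA, hS, hSc⟩ := hT A (by simp [hA]) (fun e => χ (insert b e))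
    refine ⟨c, S, fun x hx => by simpa using hAV (hSA hx), hS, fun E hES hE => ?_⟩
    have hne : E.Nonempty := card_pos.mp (by omega)
    set a := E.min' hne
    set e := E.erase a
    have haE : a ∈ E := min'_mem E hne
    have hae : ∀ x ∈ e, a < x := fun x hx =>
      lt_of_le_of_ne (min'_le E x (mem_of_mem_erase hx)) (ne_of_mem_erase hx).symm
    have he : e.card = K := by rw [card_erase_of_mem haE, hE, Nat.add_sub_cancel]
    have heS : e ⊆ S := (erase_subset a E).trans hES
    calc χ E = χ (insert a e) := by rw [insert_erase haE]
      _ = χ (insert b e) := hAb a (hSA (hES haE)) e (heS.trans hSA) he hae b (mem_singleton_self b)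
      _ = c := hSc e heS he

lemma exists_forall_monoCliqueC (K n q : ℕ) :
    ∃ N, ∀ χ : Finset (Fin N) → Fin q, ∃ c, monoCliqueC K χ c n := by
  obtain ⟨N, hN⟩ := exists_monochromatic_subset (Fin q) K n
  refine ⟨N, fun χ => ?_⟩
  obtain ⟨c, S, -, hS, hSc⟩ := hN univ (by simp) χ
  exact ⟨c, S, hS, hSc⟩

lemma forall_monoCliqueC_ramseyMulti (K n q : ℕ) :
    ∀ χ : Finset (Fin (ramseyMulti K n q)) → Fin q, ∃ c, monoCliqueC K χ c n :=
  Nat.sInf_mem (exists_forall_monoCliqueC K n q)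

section TightPath

variable {α : Type*} [LinearOrder α]

lemma List.Pairwise.sort_toFinset_eq {l : List α} (hl : l.Pairwise (· < ·)) :
    l.toFinset.sort (· ≤ ·) = l :=
  (List.toFinset_sort _ hl.nodup).mpr (hl.imp le_of_lt)

lemma Finset.pairwise_lt_sort (E : Finset α) : (E.sort (· ≤ ·)).Pairwise (· < ·) :=
  List.sortedLT_iff_pairwise.mp E.sortedLT_sort

lemma sort_window {l : List α} (hl : l.Pairwise (· < ·)) (i k : ℕ) :
    ((l.drop i).take k).toFinset.sort (· ≤ ·) = (l.drop i).take k :=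
  (hl.sublist ((List.take_sublist _ _).trans (List.drop_sublist _ _))).sort_toFinset_eq

def lowerFace (E : Finset α) : Finset α := (E.sort (· ≤ ·)).dropLast.toFinset

def upperFace (E : Finset α) : Finset α := (E.sort (· ≤ ·)).tail.toFinset

lemma sort_lowerFace (E : Finset α) : (lowerFace E).sort (· ≤ ·) = (E.sort (· ≤ ·)).dropLast :=
  (E.pairwise_lt_sort.sublist (List.dropLast_sublist _)).sort_toFinset_eq

lemma sort_upperFace (E : Finset α) : (upperFace E).sort (· ≤ ·) = (E.sort (· ≤ ·)).tail :=
  (E.pairwise_lt_sort.sublist (List.tail_sublist _)).sort_toFinset_eq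

lemma card_lowerFace (E : Finset α) : (lowerFace E).card = E.card - 1 := by
  rw [← length_sort (· ≤ ·), sort_lowerFace, List.length_dropLast, length_sort]

lemma card_upperFace (E : Finset α) : (upperFace E).card = E.card - 1 := by
  rw [← length_sort (· ≤ ·), sort_upperFace, List.length_tail, length_sort]

lemma lowerFace_subset (E : Finset α) : lowerFace E ⊆ E := fun _ hx =>
  (mem_sort (· ≤ ·)).mp (List.dropLast_subset _ (List.mem_toFinset.mp hx))

lemma upperFace_subset (E : Finset α) : upperFace E ⊆ E := fun _ hx =>
  (mem_sort (· ≤ ·)).mp (List.tail_subset _ (List.mem_toFinset.mp hx))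

lemma lowerFace_window {l : List α} (hl : l.Pairwise (· < ·)) {i K : ℕ}
    (hi : i + (K + 1) ≤ l.length) :
    lowerFace ((l.drop i).take (K + 1)).toFinset = ((l.drop i).take K).toFinset := by
  rw [lowerFace, sort_window hl, List.dropLast_eq_take, List.length_take, List.take_take,
    List.length_drop]
  congr 3
  omega

lemma upperFace_window {l : List α} (hl : l.Pairwise (· < ·)) (i K : ℕ) :
    upperFace ((l.drop i).take (K + 1)).toFinset = ((l.drop (i + 1)).take K).toFinset := by
  rw [upperFace, sort_window hl, List.tail_take_eq_take_tail, List.tail_drop]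
  rfl

def IsTightPath (χ : Finset α → Bool) (k : ℕ) (l : List α) : Prop :=
  l.Pairwise (· < ·) ∧ ∀ i, i + k ≤ l.length → χ ((l.drop i).take k).toFinset = true

variable {χ : Finset α → Bool} {k : ℕ}

lemma isTightPath_of_length_lt {l : List α} (hl : l.Pairwise (· < ·)) (hlk : l.length < k) :
    IsTightPath χ k l :=
  ⟨hl, fun i hi => absurd hi (by omega)⟩

lemma IsTightPath.take {l : List α} (h : IsTightPath χ k l) (m : ℕ) :
    IsTightPath χ k (l.take m) := by
  refine ⟨h.1.sublist (List.take_sublist m l), fun i hi => ?_⟩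
  rw [List.length_take] at hi
  rw [List.drop_take, List.take_take, min_eq_left (by omega)]
  exact h.2 i (by omega)

lemma IsTightPath.append_of_dropLast {p l : List α}
    (hp : IsTightPath χ l.length (p ++ l.dropLast)) (hl : l.Pairwise (· < ·))
    (hχ : χ l.toFinset = true) (hl2 : 2 ≤ l.length) : IsTightPath χ l.length (p ++ l) := by
  obtain ⟨x, w, rfl⟩ : ∃ x w, l = x :: w := List.exists_cons_of_length_pos (by omega)
  have hw : w ≠ [] := List.ne_nil_of_length_pos (by rw [List.length_cons] at hl2; omega)
  have hx : x ∈ (x :: w).dropLast := by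
    rw [List.dropLast_cons_of_ne_nil hw]
    exact List.mem_cons_self
  refine ⟨List.pairwise_append.mpr ⟨(List.pairwise_append.mp hp.1).1, hl, fun a ha b hb => ?_⟩,
    fun i hi => ?_⟩
  · have hax : a < x := (List.pairwise_append.mp hp.1).2.2 a ha x hx
    rcases List.mem_cons.mp hb with rfl | hb
    · exact hax
    · exact hax.trans (List.rel_of_pairwise_cons hl hb)
  · rw [List.length_append] at hi
    rcases Nat.lt_or_ge i p.length with hip | hip
    · have hsplit : p ++ x :: w = (p ++ (x :: w).dropLast) ++ [(x :: w).getLast (by simp)] := by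
        rw [List.append_assoc, List.dropLast_append_getLast]
      have hle : i + (x :: w).length ≤ (p ++ (x :: w).dropLast).length := by
        rw [List.length_append, List.length_dropLast]
        omega
      rw [hsplit, List.drop_append_of_le_length (by omega),
        List.take_append_of_le_length (by rw [List.length_drop]; omega)]
      exact hp.2 i hle
    · rw [show i = p.length by omega, List.drop_left, List.take_length]
      exact hχ

end TightPath

lemma hasTightPath_iff {k s N : ℕ} {χ : Finset (Fin N) → Bool} :
    hasTightPath k s χ true ↔ ∃ l, IsTightPath χ k l ∧ l.length = s := by
  constructor
  · rintro ⟨S, hS, hwin⟩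
    exact ⟨S.sort (· ≤ ·), ⟨S.pairwise_lt_sort, fun i hi => hwin i (by simpa [hS] using hi)⟩,
      by rw [length_sort, hS]⟩
  · rintro ⟨l, ⟨hl, hwin⟩, rfl⟩
    refine ⟨l.toFinset, by rw [List.toFinset_card_of_nodup hl.nodup], fun i hi => ?_⟩
    rw [hl.sort_toFinset_eq]
    exact hwin i hi

section UpperBound

variable {α : Type*} [LinearOrder α] [Fintype α] {χ : Finset α → Bool} {k : ℕ}

open Classical in
noncomputable def tightPathLengthTo (χ : Finset α → Bool) (k : ℕ) (e : Finset α) : ℕ :=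
  Nat.findGreatest (fun t => ∃ p : List α, p.length = t ∧ IsTightPath χ k (p ++ e.sort (· ≤ ·)))
    (Fintype.card α)

lemma exists_tightPathLengthTo {e : Finset α} (he : e.card < k) :
    ∃ p : List α, p.length = tightPathLengthTo χ k e ∧ IsTightPath χ k (p ++ e.sort (· ≤ ·)) := by
  classical
  refine Nat.findGreatest_spec (P := fun t => ∃ p : List α, p.length = t ∧
    IsTightPath χ k (p ++ e.sort (· ≤ ·))) (Nat.zero_le _) ⟨[], rfl, ?_⟩
  exact isTightPath_of_length_lt e.pairwise_lt_sort (by rwa [List.nil_append, length_sort])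

lemma le_tightPathLengthTo {e : Finset α} {p : List α}
    (hp : IsTightPath χ k (p ++ e.sort (· ≤ ·))) : p.length ≤ tightPathLengthTo χ k e := by
  classical
  have hcard := hp.1.nodup.length_le_card
  rw [List.length_append] at hcard
  exact Nat.le_findGreatest (by omega) ⟨p, rfl, hp⟩

lemma exists_tightPath_extending_lowerFace {E : Finset α} (hE : 2 ≤ E.card) (hχ : χ E = true) :
    ∃ p : List α, p.length = tightPathLengthTo χ E.card (lowerFace E) ∧
      IsTightPath χ E.card (p ++ E.sort (· ≤ ·)) ∧
      tightPathLengthTo χ E.card (lowerFace E) < tightPathLengthTo χ E.card (upperFace E) := by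
  set l := E.sort (· ≤ ·)
  have hl : l.length = E.card := length_sort _
  obtain ⟨p, hp, hpath⟩ := exists_tightPathLengthTo (χ := χ) (k := E.card) (e := lowerFace E)
    (by rw [card_lowerFace]; omega)
  have hext : IsTightPath χ E.card (p ++ l) := by
    rw [← hl]
    refine IsTightPath.append_of_dropLast ?_ E.pairwise_lt_sort (by rwa [sort_toFinset]) (by omega)
    rwa [hl, ← sort_lowerFace]
  have hne : l ≠ [] := List.ne_nil_of_length_pos (by omega)
  have hext' : IsTightPath χ E.card ((p ++ [l.head hne]) ++ (upperFace E).sort (· ≤ ·)) := by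
    rwa [sort_upperFace, List.append_assoc, List.singleton_append, List.cons_head_tail]
  refine ⟨p, hp, hext, ?_⟩
  simpa [hp] using le_tightPathLengthTo hext'

end UpperBound

theorem hasTightPath_or_monoClique {K r n N : ℕ} (hK : 1 ≤ K)
    (h : ∀ φ : Finset (Fin N) → Fin (r + 2), ∃ c, monoCliqueC K φ c n)
    (χ : Finset (Fin N) → Bool) :
    hasTightPath (K + 1) (K + 1 + (r + 1)) χ true ∨ monoClique (K + 1) χ false n := by
  obtain ⟨c, S, hS, hSc⟩ := h fun e => ⟨min (tightPathLengthTo χ (K + 1) e) (r + 1), by omega⟩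
  by_cases hblue : ∀ E ⊆ S, E.card = K + 1 → χ E = false
  · exact Or.inr ⟨S, hS, hblue⟩
  push Not at hblue
  obtain ⟨E, hES, hE, hred⟩ := hblue
  obtain ⟨p, hp, hpath, hgrow⟩ :=
    exists_tightPath_extending_lowerFace (E := E) (by omega) (by simpa using hred)
  rw [hE] at hp hpath hgrow
  have hcap : min (tightPathLengthTo χ (K + 1) (lowerFace E)) (r + 1) =
      min (tightPathLengthTo χ (K + 1) (upperFace E)) (r + 1) := congrArg Fin.val <|
    (hSc _ ((lowerFace_subset E).trans hES) (by rw [card_lowerFace, hE]; rfl)).trans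
      (hSc _ ((upperFace_subset E).trans hES) (by rw [card_upperFace, hE]; rfl)).symm
  refine Or.inl (hasTightPath_iff.mpr ⟨_, hpath.take (K + 1 + (r + 1)), ?_⟩)
  rw [List.length_take, List.length_append, length_sort, hE]
  omega

section LowerBound

variable {α β : Type*} [LinearOrder α] [LinearOrder β]

def ascentColoring (φ : Finset α → β) (E : Finset α) : Bool :=
  decide (φ (lowerFace E) < φ (upperFace E))

lemma ascentColoring_window (φ : Finset α → β) {l : List α} (hl : l.Pairwise (· < ·)) {i K : ℕ}
    (hi : i + (K + 1) ≤ l.length) :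
    ascentColoring φ ((l.drop i).take (K + 1)).toFinset =
      decide (φ ((l.drop i).take K).toFinset < φ ((l.drop (i + 1)).take K).toFinset) := by
  rw [ascentColoring, lowerFace_window hl hi, upperFace_window hl]

lemma not_isTightPath_ascentColoring [Fintype β] (φ : Finset α → β) {K : ℕ} {l : List α}
    (hl : K + Fintype.card β ≤ l.length) : ¬ IsTightPath (ascentColoring φ) (K + 1) l := by
  rintro ⟨hsort, hwin⟩
  let g : Fin (Fintype.card β + 1) → β := fun i => φ ((l.drop i).take K).toFinset
  have hg : StrictMono g := Fin.strictMono_iff_lt_succ.mpr fun i => by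
    have hi := hwin i (by omega)
    rw [ascentColoring_window φ hsort (by omega)] at hi
    exact of_decide_eq_true hi
  simpa using Fintype.card_le_of_injective g hg.injective

variable {φ : Finset α → β} {K : ℕ} {S : Finset α}

lemma window_le_of_ascentColoring_eq_false
    (hS : ∀ E ⊆ S, E.card = K + 1 → ascentColoring φ E = false)
    {l : List α} (hl : l.Pairwise (· < ·)) (hlS : ∀ x ∈ l, x ∈ S) {j : ℕ}
    (hj : j + (K + 1) ≤ l.length) :
    φ ((l.drop (j + 1)).take K).toFinset ≤ φ ((l.drop j).take K).toFinset := by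
  have hwin : ((l.drop j).take (K + 1)).toFinset ⊆ S := fun x hx =>
    hlS x (((List.take_sublist _ _).trans (List.drop_sublist _ _)).subset (List.mem_toFinset.mp hx))
  have hcard : ((l.drop j).take (K + 1)).toFinset.card = K + 1 := by
    rw [← length_sort (· ≤ ·), sort_window hl, List.length_take, List.length_drop]
    omega
  have hblue := hS _ hwin hcard
  rw [ascentColoring_window φ hl hj] at hblue
  exact not_lt.mp (of_decide_eq_false hblue)

lemma le_of_ascentColoring_eq_false (hS : ∀ E ⊆ S, E.card = K + 1 → ascentColoring φ E = false)
    {e f : Finset α} (he : e ⊆ S) (hf : f ⊆ S) (heK : e.card = K) (hfK : f.card = K)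
    (hef : ∀ x ∈ e, ∀ y ∈ f, x < y) : φ f ≤ φ e := by
  set l := e.sort (· ≤ ·) ++ f.sort (· ≤ ·)
  have hlen : (e.sort (· ≤ ·)).length = K := by rw [length_sort, heK]
  have hl : l.Pairwise (· < ·) := List.pairwise_append.mpr ⟨e.pairwise_lt_sort,
    f.pairwise_lt_sort, fun x hx y hy => hef x ((mem_sort _).mp hx) y ((mem_sort _).mp hy)⟩
  have hlS : ∀ x ∈ l, x ∈ S := fun x hx => by
    rcases List.mem_append.mp hx with hx | hx
    · exact he ((mem_sort _).mp hx)
    · exact hf ((mem_sort _).mp hx)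
  have hchain : ∀ j ≤ K, φ ((l.drop j).take K).toFinset ≤ φ e := by
    intro j hj
    induction j with
    | zero => rw [List.drop_zero, List.take_left' hlen, sort_toFinset]
    | succ j ih =>
      have hj' : j + (K + 1) ≤ l.length := by
        rw [List.length_append, hlen, length_sort, hfK]
        omega
      exact (window_le_of_ascentColoring_eq_false hS hl hlS hj').trans (ih (by omega))
  have hK := hchain K le_rfl
  rwa [List.drop_left' hlen, List.take_of_length_le (by rw [length_sort, hfK]),
    sort_toFinset] at hK

end LowerBound

lemma Finset.exists_subset_card_eq_forall_lt {α : Type*} [LinearOrder α] (T : Finset α) {m : ℕ}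
    (hm : m ≤ T.card) : ∃ B ⊆ T, B.card = m ∧ ∀ x ∈ B, ∀ y ∈ T \ B, x < y := by
  classical
  induction T using Finset.induction_on_max generalizing m with
  | empty => exact ⟨∅, subset_rfl, by simp at hm ⊢; omega, by simp⟩
  | insert a T haT ih =>
    have haT' : a ∉ T := fun ha => (haT a ha).false
    rw [card_insert_of_notMem haT'] at hm
    rcases Nat.lt_or_ge m (T.card + 1) with hlt | hge
    · obtain ⟨B, hBT, hB, hBlt⟩ := ih (m := m) (by omega)
      refine ⟨B, hBT.trans (subset_insert a T), hB, fun x hx y hy => ?_⟩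
      rcases mem_insert.mp (mem_sdiff.mp hy).1 with rfl | hyT
      · exact haT x (hBT hx)
      · exact hBlt x hx y (mem_sdiff.mpr ⟨hyT, (mem_sdiff.mp hy).2⟩)
    · exact ⟨insert a T, subset_rfl, by rw [card_insert_of_notMem haT']; omega, by simp⟩

lemma exists_monochromatic_of_antitone {α : Type*} [LinearOrder α] {q K m : ℕ}
    (φ : Finset α → Fin q) (j : ℕ) {T : Finset α}
    (hanti : ∀ e ⊆ T, ∀ f ⊆ T, e.card = K → f.card = K → (∀ x ∈ e, ∀ y ∈ f, x < y) → φ f ≤ φ e)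
    (hcol : ∀ e ⊆ T, e.card = K → (φ e : ℕ) ≤ j) (hT : (j + 1) * m ≤ T.card) :
    ∃ c, ∃ B ⊆ T, B.card = m ∧ ∀ e ⊆ B, e.card = K → φ e = c := by
  induction j generalizing T with
  | zero =>
    obtain ⟨B, hBT, hB⟩ := exists_subset_card_eq (show m ≤ T.card by omega)
    exact ⟨⟨0, (φ ∅).pos⟩, B, hBT, hB, fun e he heK =>
      Fin.ext (Nat.le_zero.mp (hcol e (he.trans hBT) heK))⟩
  | succ j ih =>
    obtain ⟨B, hBT, hB, hBR⟩ := T.exists_subset_card_eq_forall_lt (m := m) (by nlinarith)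
    by_cases hmono : ∃ c, ∀ e ⊆ B, e.card = K → φ e = c
    · obtain ⟨c, hc⟩ := hmono
      exact ⟨c, B, hBT, hB, hc⟩
    push Not at hmono
    obtain ⟨g, hgB, hgK, -⟩ := hmono (φ ∅)
    obtain ⟨f, hfB, hfK, hfg⟩ := hmono (φ g)
    have hR : T \ B ⊆ T := sdiff_subset
    have hRcol : ∀ e ⊆ T \ B, e.card = K → (φ e : ℕ) ≤ j := fun e he heK => by
      have hle : ∀ b ⊆ B, b.card = K → φ e ≤ φ b := fun b hb hbK =>
        hanti b (hb.trans hBT) e (he.trans hR) hbK heK fun x hx y hy => hBR x (hb hx) y (he hy)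
      have hg := Fin.le_def.mp (hle g hgB hgK)
      have hf := Fin.le_def.mp (hle f hfB hfK)
      have hgj := hcol g (hgB.trans hBT) hgK
      have hfj := hcol f (hfB.trans hBT) hfK
      have hne : (φ f : ℕ) ≠ φ g := Fin.val_ne_of_ne hfg
      omega
    obtain ⟨c, C, hCR, hC, hCc⟩ := ih (T := T \ B)
      (fun e he f hf => hanti e (he.trans hR) f (hf.trans hR)) hRcol
      (by rw [card_sdiff_of_subset hBT, hB]; rw [add_mul] at hT; omega)
    exact ⟨c, C, hCR.trans hR, hC, hCc⟩

theorem monoCliqueC_of_hasTightPath_or_monoClique {K r n N : ℕ}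
    (h : ∀ χ : Finset (Fin N) → Bool,
      hasTightPath (K + 1) (K + 1 + (r + 1)) χ true ∨ monoClique (K + 1) χ false n)
    (φ : Finset (Fin N) → Fin (r + 2)) : ∃ c, monoCliqueC K φ c (n / (r + 2)) := by
  rcases h (ascentColoring φ) with hred | ⟨S, hS, hblue⟩
  · obtain ⟨l, hl, hlen⟩ := hasTightPath_iff.mp hred
    exact absurd hl (not_isTightPath_ascentColoring φ (by rw [hlen, Fintype.card_fin]; omega))
  · obtain ⟨c, B, -, hB, hBc⟩ := exists_monochromatic_of_antitone φ (r + 1)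
      (fun e he f hf heK hfK hef => le_of_ascentColoring_eq_false hblue he hf heK hfK hef)
      (fun e _ _ => Nat.lt_succ_iff.mp (φ e).isLt) (by rw [hS]; exact Nat.mul_div_le n (r + 2))
    exact ⟨c, B, hB, hBc⟩

lemma forall_hasTightPath_or_monoClique_rbar {k s n N : ℕ}
    (h : ∀ χ : Finset (Fin N) → Bool, hasTightPath k s χ true ∨ monoClique k χ false n) :
    ∀ χ : Finset (Fin (rbar k s n)) → Bool, hasTightPath k s χ true ∨ monoClique k χ false n :=
  Nat.sInf_mem (s := {M | ∀ χ : Finset (Fin M) → Bool,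
    hasTightPath k s χ true ∨ monoClique k χ false n}) ⟨N, h⟩

theorem stmt_2 : ∀ k s n : ℕ, 2 ≤ k → k + 1 ≤ s →
    ramseyMulti (k - 1) (n / (s - k + 1)) (s - k + 1) ≤ rbar k s n ∧
    rbar k s n ≤ ramseyMulti (k - 1) n (s - k + 1) := by
  intro k s n hk hs
  obtain ⟨K, rfl⟩ : ∃ K, k = K + 1 := ⟨k - 1, by omega⟩
  obtain ⟨r, rfl⟩ : ∃ r, s = K + 1 + (r + 1) := ⟨s - K - 2, by omega⟩
  rw [show K + 1 - 1 = K by omega, show K + 1 + (r + 1) - (K + 1) + 1 = r + 2 by omega]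
  have hupper := hasTightPath_or_monoClique (by omega) (forall_monoCliqueC_ramseyMulti K n (r + 2))
  exact ⟨Nat.sInf_le (monoCliqueC_of_hasTightPath_or_monoClique
    (forall_hasTightPath_or_monoClique_rbar hupper)), Nat.sInf_le hupper⟩
end

section
/- The following two statements are equivalent: (i) there is a constant c > 0 such that r_3(n,n) > 2^{2^{cn}} for all sufficiently large n; (ii) there is a constant c > 0 such that r̄_4(P_5, n) ≥ 2^{2^{cn}} for all sufficiently large n. -/
open Filter

/-!
Both inequalities between the Ramsey numbers are stepping-up constructions.

`r̄₄(P₅, n) ≤ r₃(n, n)`: colour a triple red when some vertex below it extends it to a red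
quadruple. If the 4-colouring has no red tight path `P₅`, a monochromatic clique of the triple
colouring, of either colour, is a blue 4-clique.

`r₃(n, n) ≤ r̄₄(P₅, 2n)`: colour `a < b < c < d` red when `abc` is blue and `bcd` is red. This
colouring has no red `P₅`, so it has a blue clique `S` of size `2n`, on which blueness of triples
propagates to the right (`abc` blue ⇒ `bcd` blue). Cutting `S` at the least top vertex of a blue
triple leaves only red triples below the cut and only blue triples above it.

Since `r̄₄(P₅, ·)` is monotone, a double-exponential lower bound for one number transfers to the
other with the constant `c` divided by at most four.
-/

open Finset

theorem List.length_eq_five {α : Type*} {l : List α} :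
    l.length = 5 ↔ ∃ a b c d e, l = [a, b, c, d, e] := by
  refine ⟨fun h => ?_, by rintro ⟨a, b, c, d, e, rfl⟩; rfl⟩
  match l, h with
  | [a, b, c, d, e], _ => exact ⟨a, b, c, d, e, rfl⟩

section Sorting

variable {α : Type*} [LinearOrder α]

theorem List.toFinset_sort_of_isChain {l : List α} (hl : l.IsChain (· < ·)) :
    l.toFinset.sort = l :=
  (List.toFinset_sort _ (List.isChain_iff_pairwise.1 hl).nodup).2
    ((List.isChain_iff_pairwise.1 hl).imp le_of_lt)

theorem Finset.sort_four {a b c d : α} (hab : a < b) (hbc : b < c) (hcd : c < d) :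
    ({a, b, c, d} : Finset α).sort = [a, b, c, d] := by
  simpa using List.toFinset_sort_of_isChain (l := [a, b, c, d]) (by simp [hab, hbc, hcd])

theorem Finset.sort_five {a b c d e : α} (hab : a < b) (hbc : b < c) (hcd : c < d)
    (hde : d < e) : ({a, b, c, d, e} : Finset α).sort = [a, b, c, d, e] := by
  simpa using
    List.toFinset_sort_of_isChain (l := [a, b, c, d, e]) (by simp [hab, hbc, hcd, hde])

theorem Finset.exists_lt_lt_of_card_eq_three {s : Finset α} (h : s.card = 3) :
    ∃ a b c, a < b ∧ b < c ∧ s = {a, b, c} := by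
  obtain ⟨a, b, c, hl⟩ := List.length_eq_three.1 ((s.length_sort (· ≤ ·)).trans h)
  have hs := s.sortedLT_sort.pairwise
  have hst := s.sort_toFinset (· ≤ ·)
  rw [hl] at hs hst
  simp only [List.pairwise_cons] at hs
  exact ⟨a, b, c, hs.1 b (by simp), hs.2.1 c (by simp), by simpa using hst.symm⟩

theorem Finset.exists_lt_lt_lt_of_card_eq_four {s : Finset α} (h : s.card = 4) :
    ∃ a b c d, a < b ∧ b < c ∧ c < d ∧ s = {a, b, c, d} := by
  obtain ⟨a, b, c, d, hl⟩ := List.length_eq_four.1 ((s.length_sort (· ≤ ·)).trans h)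
  have hs := s.sortedLT_sort.pairwise
  have hst := s.sort_toFinset (· ≤ ·)
  rw [hl] at hs hst
  simp only [List.pairwise_cons] at hs
  exact ⟨a, b, c, d, hs.1 b (by simp), hs.2.1 c (by simp), hs.2.2.1 d (by simp),
    by simpa using hst.symm⟩

theorem Finset.forall_card_eq_three_subset_iff {S : Finset α} {P : Finset α → Prop} :
    (∀ e ⊆ S, e.card = 3 → P e) ↔
      ∀ a ∈ S, ∀ b ∈ S, ∀ c ∈ S, a < b → b < c → P {a, b, c} := by
  refine ⟨fun h a ha b hb c hc hab hbc => h _ ?_ ?_, fun h e heS he => ?_⟩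
  · simp [insert_subset_iff, ha, hb, hc]
  · exact card_eq_three.2 ⟨a, b, c, hab.ne, (hab.trans hbc).ne, hbc.ne, rfl⟩
  · obtain ⟨a, b, c, hab, hbc, rfl⟩ := exists_lt_lt_of_card_eq_three he
    simp only [insert_subset_iff, singleton_subset_iff] at heS
    exact h a heS.1 b heS.2.1 c heS.2.2 hab hbc

theorem Finset.forall_card_eq_four_subset_iff {S : Finset α} {P : Finset α → Prop} :
    (∀ e ⊆ S, e.card = 4 → P e) ↔
      ∀ a ∈ S, ∀ b ∈ S, ∀ c ∈ S, ∀ d ∈ S, a < b → b < c → c < d → P {a, b, c, d} := by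
  refine ⟨fun h a ha b hb c hc d hd hab hbc hcd => h _ ?_ ?_, fun h e heS he => ?_⟩
  · simp [insert_subset_iff, ha, hb, hc, hd]
  · rw [← length_sort (· ≤ ·), sort_four hab hbc hcd]; rfl
  · obtain ⟨a, b, c, d, hab, hbc, hcd, rfl⟩ := exists_lt_lt_lt_of_card_eq_four he
    simp only [insert_subset_iff, singleton_subset_iff] at heS
    exact h a heS.1 b heS.2.1 c heS.2.2.1 d heS.2.2.2 hab hbc hcd

end Sorting

section Splitting

variable {α : Type*} [LinearOrder α] {P : α → α → α → Prop} {S : Finset α}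

def PropagatesOn (P : α → α → α → Prop) (S : Finset α) : Prop :=
  ∀ a ∈ S, ∀ b ∈ S, ∀ c ∈ S, ∀ d ∈ S, a < b → b < c → c < d → P a b c → P b c d

theorem PropagatesOn.above (hP : PropagatesOn P S)
    {a b c x y z : α} (ha : a ∈ S) (hb : b ∈ S) (hc : c ∈ S) (hx : x ∈ S) (hy : y ∈ S)
    (hz : z ∈ S) (hab : a < b) (hbc : b < c) (hcx : c ≤ x) (hxy : x < y) (hyz : y < z)
    (habc : P a b c) : P x y z := by
  rcases hcx.eq_or_lt with rfl | hcx
  · exact hP _ hb _ hc _ hy _ hz hbc hxy hyz (hP _ ha _ hb _ hc _ hy hab hbc hxy habc)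
  · have hbcx := hP _ ha _ hb _ hc _ hx hab hbc hcx habc
    have hcxy := hP _ hb _ hc _ hx _ hy hbc hcx hxy hbcx
    exact hP _ hc _ hx _ hy _ hz hcx hxy hyz hcxy

theorem PropagatesOn.exists_homogeneous_half (hP : PropagatesOn P S) :
    ∃ T ⊆ S, S.card ≤ 2 * T.card ∧
      ((∀ x ∈ T, ∀ y ∈ T, ∀ z ∈ T, x < y → y < z → ¬P x y z) ∨
        ∀ x ∈ T, ∀ y ∈ T, ∀ z ∈ T, x < y → y < z → P x y z) := by
  classical
  set above : α → Prop := fun x => ∃ a ∈ S, ∃ b ∈ S, ∃ c ∈ S, a < b ∧ b < c ∧ c ≤ x ∧ P a b c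
  have hcard := S.card_filter_add_card_filter_not above
  by_cases hhalf : S.card ≤ 2 * (S.filter above).card
  · refine ⟨S.filter above, filter_subset _ _, hhalf, Or.inr fun x hx y hy z hz hxy hyz => ?_⟩
    rw [mem_filter] at hx hy hz
    obtain ⟨a, ha, b, hb, c, hc, hab, hbc, hcx, habc⟩ := hx.2
    exact hP.above ha hb hc hx.1 hy.1 hz.1 hab hbc hcx hxy hyz habc
  · refine ⟨S.filter (¬above ·), filter_subset _ _, by omega,
      Or.inl fun x hx y hy z hz hxy hyz hxyz => ?_⟩
    rw [mem_filter] at hx hy hz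
    exact hz.2 ⟨x, hx.1, y, hy.1, z, hz.1, hxy, hyz, le_rfl, hxyz⟩

end Splitting

section Colorings

variable {N n : ℕ}

theorem monoClique_of_le_card {k : ℕ} {χ : Finset (Fin N) → Bool} {c : Bool}
    {S : Finset (Fin N)} (hS : n ≤ S.card) (h : ∀ e ⊆ S, e.card = k → χ e = c) :
    monoClique k χ c n := by
  obtain ⟨T, hTS, hT⟩ := exists_subset_card_eq hS
  exact ⟨T, hT, fun e he => h e (he.trans hTS)⟩

theorem monoClique.mono {k m : ℕ} {χ : Finset (Fin N) → Bool} {c : Bool}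
    (h : monoClique k χ c m) (hnm : n ≤ m) : monoClique k χ c n := by
  obtain ⟨S, hS, hmono⟩ := h
  exact monoClique_of_le_card (hS ▸ hnm) hmono

theorem hasTightPath_four_five_iff {χ : Finset (Fin N) → Bool} {col : Bool} :
    hasTightPath 4 5 χ col ↔ ∃ a b c d e : Fin N, a < b ∧ b < c ∧ c < d ∧ d < e ∧
      χ {a, b, c, d} = col ∧ χ {b, c, d, e} = col := by
  constructor
  · rintro ⟨S, hcard, hwin⟩
    obtain ⟨a, b, c, d, e, hl⟩ := List.length_eq_five.1 ((S.length_sort (· ≤ ·)).trans hcard)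
    have hs := S.sortedLT_sort.pairwise
    have h0 := hwin 0 (by norm_num)
    have h1 := hwin 1 (by norm_num)
    rw [hl] at hs h0 h1
    simp only [List.pairwise_cons] at hs
    exact ⟨a, b, c, d, e, hs.1 b (by simp), hs.2.1 c (by simp), hs.2.2.1 d (by simp),
      hs.2.2.2.1 e (by simp), by simpa using h0, by simpa using h1⟩
  · rintro ⟨a, b, c, d, e, hab, hbc, hcd, hde, h0, h1⟩
    have hsort := sort_five hab hbc hcd hde
    refine ⟨{a, b, c, d, e}, by rw [← length_sort (· ≤ ·), hsort]; rfl, fun i hi => ?_⟩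
    rw [hsort]
    match i, hi with
    | 0, _ => simpa using h0
    | 1, _ => simpa using h1

def ArrowsCliqueThree (n N : ℕ) : Prop :=
  ∀ χ : Finset (Fin N) → Bool, monoClique 3 χ true n ∨ monoClique 3 χ false n

def ArrowsTightPath (n N : ℕ) : Prop :=
  ∀ χ : Finset (Fin N) → Bool, hasTightPath 4 5 χ true ∨ monoClique 4 χ false n

def leftExtensionColoring (χ : Finset (Fin N) → Bool) (t : Finset (Fin N)) : Bool :=
  decide (∃ a, (∀ x ∈ t, a < x) ∧ χ (insert a t) = true)

theorem arrowsTightPath_of_arrowsCliqueThree (h : ArrowsCliqueThree n N) :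
    ArrowsTightPath n N := by
  intro χ
  by_cases hpath : hasTightPath 4 5 χ true
  · exact Or.inl hpath
  rw [hasTightPath_four_five_iff] at hpath
  push Not at hpath
  refine Or.inr ?_
  rcases h (leftExtensionColoring χ) with ⟨S, hS, hred⟩ | ⟨S, hS, hblue⟩
  · refine ⟨S, hS, forall_card_eq_four_subset_iff.2 fun a ha b hb c hc d hd hab hbc hcd => ?_⟩
    have := forall_card_eq_three_subset_iff.1 hred a ha b hb c hc hab hbc
    obtain ⟨x, hx, hxabc⟩ := by simpa [leftExtensionColoring] using this
    simpa using hpath x a b c d hx.1 hab hbc hcd hxabc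
  · refine ⟨S, hS, forall_card_eq_four_subset_iff.2 fun a ha b hb c hc d hd hab hbc hcd => ?_⟩
    have := forall_card_eq_three_subset_iff.1 hblue b hb c hc d hd hbc hcd
    simp only [leftExtensionColoring, decide_eq_false_iff_not, not_exists, not_and] at this
    simpa using this a (by simp [hab, hab.trans hbc, (hab.trans hbc).trans hcd])

def colorChangeColoring (χ : Finset (Fin N) → Bool) (e : Finset (Fin N)) : Bool :=
  !χ ((e.sort.take 3).toFinset) && χ ((e.sort.drop 1).toFinset)

theorem colorChangeColoring_apply {χ : Finset (Fin N) → Bool} {a b c d : Fin N}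
    (hab : a < b) (hbc : b < c) (hcd : c < d) :
    colorChangeColoring χ {a, b, c, d} = (!χ {a, b, c} && χ {b, c, d}) := by
  simp [colorChangeColoring, sort_four hab hbc hcd]

theorem not_hasTightPath_colorChangeColoring (χ : Finset (Fin N) → Bool) :
    ¬hasTightPath 4 5 (colorChangeColoring χ) true := by
  rw [hasTightPath_four_five_iff]
  rintro ⟨a, b, c, d, e, hab, hbc, hcd, hde, habcd, hbcde⟩
  rw [colorChangeColoring_apply hab hbc hcd] at habcd
  rw [colorChangeColoring_apply hbc hcd hde] at hbcde
  simp_all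

theorem arrowsCliqueThree_of_arrowsTightPath (h : ArrowsTightPath (2 * n) N) :
    ArrowsCliqueThree n N := by
  intro χ
  obtain ⟨S, hS, hblue⟩ :=
    (h (colorChangeColoring χ)).resolve_left (not_hasTightPath_colorChangeColoring χ)
  have hprop : PropagatesOn (fun a b c => χ {a, b, c} = false) S := by
    intro a ha b hb c hc d hd hab hbc hcd habc
    have := forall_card_eq_four_subset_iff.1 hblue a ha b hb c hc d hd hab hbc hcd
    simpa [colorChangeColoring_apply hab hbc hcd, habc] using this
  obtain ⟨T, hTS, hT, hred | hblue⟩ := hprop.exists_homogeneous_half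
  · exact Or.inl <| monoClique_of_le_card (S := T) (by omega) <|
      forall_card_eq_three_subset_iff.2 fun x hx y hy z hz hxy hyz => by
        simpa using hred x hx y hy z hz hxy hyz
  · exact Or.inr <| monoClique_of_le_card (S := T) (by omega) <|
      forall_card_eq_three_subset_iff.2 hblue

theorem rbar_le_ramsey (hne : {N | ArrowsCliqueThree n N}.Nonempty) :
    rbar 4 5 n ≤ ramsey 3 n n :=
  csInf_le_csInf' hne fun _ => arrowsTightPath_of_arrowsCliqueThree

theorem ramsey_le_rbar {m : ℕ} (hnm : 2 * n ≤ m) (hne : {N | ArrowsTightPath m N}.Nonempty) :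
    ramsey 3 n n ≤ rbar 4 5 m :=
  csInf_le_csInf' hne fun _ hN =>
    arrowsCliqueThree_of_arrowsTightPath fun χ => (hN χ).imp_right (·.mono hnm)

end Colorings

theorem strictMono_two_rpow_two_rpow : StrictMono fun x : ℝ => (2:ℝ) ^ (2:ℝ) ^ x :=
  fun _ _ h => Real.rpow_lt_rpow_of_exponent_lt one_lt_two
    (Real.rpow_lt_rpow_of_exponent_lt one_lt_two h)

theorem stmt_3 :
    (∃ c : ℝ, 0 < c ∧ ∀ᶠ n : ℕ in atTop,
      (2:ℝ) ^ ((2:ℝ) ^ (c * n)) < (ramsey 3 n n : ℝ)) ↔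
    (∃ c : ℝ, 0 < c ∧ ∀ᶠ n : ℕ in atTop,
      (2:ℝ) ^ ((2:ℝ) ^ (c * n)) ≤ (rbar 4 5 n : ℝ)) := by
  have two_pow_pos (x : ℝ) : (0:ℝ) < 2 ^ (2:ℝ) ^ x := by positivity
  constructor
  · rintro ⟨c, hc, hev⟩
    obtain ⟨N₀, hN₀⟩ := eventually_atTop.1 hev
    refine ⟨c / 4, by positivity, eventually_atTop.2 ⟨2 * N₀ + 2, fun m hm => ?_⟩⟩
    have hramsey_pos : 0 < ramsey 3 m m := by
      exact_mod_cast (two_pow_pos _).trans (hN₀ m (by omega))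
    have hne : {N | ArrowsTightPath m N}.Nonempty :=
      (Nat.nonempty_of_pos_sInf hramsey_pos).imp fun _ => arrowsTightPath_of_arrowsCliqueThree
    have hm4 : (m : ℝ) ≤ 4 * (m / 2 : ℕ) := by exact_mod_cast (by omega : m ≤ 4 * (m / 2))
    calc (2:ℝ) ^ (2:ℝ) ^ (c / 4 * m) ≤ 2 ^ (2:ℝ) ^ (c * (m / 2 : ℕ)) :=
          strictMono_two_rpow_two_rpow.monotone (by nlinarith)
      _ ≤ ramsey 3 (m / 2) (m / 2) := (hN₀ _ (by omega)).le
      _ ≤ rbar 4 5 m := by exact_mod_cast ramsey_le_rbar (by omega) hne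
  · rintro ⟨c, hc, hev⟩
    obtain ⟨N₀, hN₀⟩ := eventually_atTop.1 hev
    refine ⟨c / 2, by positivity, eventually_atTop.2 ⟨N₀ + 1, fun n hn => ?_⟩⟩
    have hrbar_pos : 0 < rbar 4 5 (2 * n) := by
      exact_mod_cast (two_pow_pos _).trans_le (hN₀ (2 * n) (by omega))
    have hne : {N | ArrowsCliqueThree n N}.Nonempty :=
      (Nat.nonempty_of_pos_sInf hrbar_pos).imp fun _ => arrowsCliqueThree_of_arrowsTightPath
    have hn : (1:ℝ) ≤ n := by exact_mod_cast (by omega : 1 ≤ n)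
    calc (2:ℝ) ^ (2:ℝ) ^ (c / 2 * n) < 2 ^ (2:ℝ) ^ (c * n) :=
          strictMono_two_rpow_two_rpow (by nlinarith)
      _ ≤ rbar 4 5 n := hN₀ n (by omega)
      _ ≤ ramsey 3 n n := by exact_mod_cast rbar_le_ramsey hne
end

section
/- There exist absolute constants c_1, c_2 > 0 such that for all sufficiently large n: 2^{c_1 n^2} < r_3(n,n) < 2^{2^{c_2 n}}. -/
open Filter

/-!
Lower bound (Erdős–Hajnal–Rado): there are `2 * C(B, n)` pairs (n-set, colour), and each is
monochromatic in only a `2 ^ (-C(n, 3))` fraction of all colourings, so for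
`B = 2 ^ ⌈n² / 100⌉` some colouring of the triples of a `B`-set has no monochromatic `n`-set.

Upper bound (Erdős–Rado): repeatedly take the least remaining point `x` and keep only the
largest class of the remaining points `y` under the colour vector `(χ {s, x, y})` over the
points `s` chosen so far. Step `t` loses a factor `2 ^ t`, so `2 ^ (r ^ 2)` points give `r`
chosen points on which the colour of a triple `a < b < c` depends only on `{a, b}`. Colouring
each pair `p` of the first `r - 1` chosen points by `χ (p ∪ {last chosen point})`, Ramsey's
theorem for graphs with `r - 1 = 4 ^ n` yields a monochromatic `n`-set for `χ`.
-/

theorem Nat.two_pow_le_of_two_pow_le_mul_add_one {t r m : ℕ}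
    (h : 2 ^ ((t + (r + 1)) * (r + 1)) ≤ 2 ^ t * m + 1) : 2 ^ ((t + 1 + r) * r) ≤ m := by
  have hsplit : 2 ^ ((t + (r + 1)) * (r + 1)) = 2 ^ t * (2 ^ (r + 1) * 2 ^ ((t + 1 + r) * r)) := by
    rw [← pow_add, ← pow_add]; congr 1; ring
  have h2 : 2 ≤ 2 ^ (r + 1) := Nat.le_self_pow (by omega) 2
  have ht : 1 ≤ 2 ^ t := Nat.one_le_two_pow
  rw [hsplit] at h
  generalize 2 ^ t = A, 2 ^ (r + 1) = B, 2 ^ ((t + 1 + r) * r) = X at *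
  by_contra! hm
  have : A * (2 * (m + 1)) ≤ A * (B * X) := Nat.mul_le_mul_left A (Nat.mul_le_mul h2 hm)
  nlinarith

theorem Finset.exists_card_le_mul_card_filter_eq {α β : Type*} [Fintype β] [Nonempty β]
    [DecidableEq β] (s : Finset α) (f : α → β) :
    ∃ b, s.card ≤ Fintype.card β * (s.filter (f · = b)).card := by
  have hβ : (0 : ℚ) < Fintype.card β := by exact_mod_cast Fintype.card_pos
  obtain ⟨b, -, hb⟩ := Finset.exists_le_card_fiber_of_nsmul_le_card_of_maps_to
    (f := f) (t := Finset.univ) (fun _ _ => Finset.mem_univ _) Finset.univ_nonempty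
    (b := (s.card : ℚ) / Fintype.card β)
    (by rw [Finset.card_univ, nsmul_eq_mul, mul_div_cancel₀ _ hβ.ne'])
  refine ⟨b, ?_⟩
  rw [div_le_iff₀ hβ] at hb
  exact_mod_cast hb.trans_eq (mul_comm _ _)

namespace Finset

section Pairs

variable {α : Type*}

def IsMonochromatic (χ : Finset α → Bool) (k : ℕ) (c : Bool) (S : Finset α) : Prop :=
  ∀ e ⊆ S, e.card = k → χ e = c

theorem isMonochromatic_empty (χ : Finset α → Bool) {k : ℕ} (hk : k ≠ 0) (c : Bool) :
    IsMonochromatic χ k c ∅ := by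
  intro e he hcard
  simp [subset_empty.mp he] at hcard
  exact absurd hcard.symm hk

variable [DecidableEq α]

theorem exists_mem_eq_pair_of_subset_insert {s S : Finset α} {x : α} (hx : x ∈ s)
    (hs : s.card = 2) (hsub : s ⊆ insert x S) : ∃ a ∈ S, s = {x, a} := by
  obtain ⟨a, ha⟩ := card_eq_one.mp (by rw [card_erase_of_mem hx, hs] : (s.erase x).card = 1)
  have ha' : a ∈ s.erase x := ha ▸ mem_singleton_self a
  exact ⟨a, (mem_insert.mp (hsub (mem_of_mem_erase ha'))).resolve_left (ne_of_mem_erase ha'),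
    by rw [← insert_erase hx, ha]⟩

theorem IsMonochromatic.insert_of_forall_pair {χ : Finset α → Bool} {c : Bool} {S : Finset α}
    {v : α} (hS : IsMonochromatic χ 2 c S) (hv : ∀ y ∈ S, χ {v, y} = c) :
    IsMonochromatic χ 2 c (insert v S) := by
  intro e he hcard
  by_cases hve : v ∈ e
  · obtain ⟨y, hyS, rfl⟩ := exists_mem_eq_pair_of_subset_insert hve hcard he
    exact hv y hyS
  · exact hS e ((subset_insert_iff_of_notMem hve).mp he) hcard

theorem exists_isMonochromatic_two_of_two_pow_le (χ : Finset α → Bool) (w : Bool → ℕ)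
    (V : Finset α) (hV : 2 ^ (w true + w false) ≤ V.card) :
    ∃ c, ∃ S ⊆ V, S.card = w c ∧ IsMonochromatic χ 2 c S := by
  induction hm : w true + w false generalizing w V with
  | zero => exact ⟨true, ∅, empty_subset _, by simp; omega, isMonochromatic_empty χ two_ne_zero _⟩
  | succ m ih =>
    by_cases h0 : ∃ c, w c = 0
    · obtain ⟨c, hc⟩ := h0
      exact ⟨c, ∅, empty_subset _, hc.symm, isMonochromatic_empty χ two_ne_zero c⟩
    push Not at h0
    rw [hm, pow_succ] at hV
    obtain ⟨v, hv⟩ := card_pos.mp (lt_of_lt_of_le (by positivity) hV)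
    obtain ⟨b, hb⟩ := (V.erase v).exists_card_le_mul_card_filter_eq (fun y => χ {v, y})
    set A := (V.erase v).filter (fun y => χ {v, y} = b)
    rw [card_erase_of_mem hv, Fintype.card_bool] at hb
    have hAV : A ⊆ V := (filter_subset _ _).trans (erase_subset _ _)
    have hw' : Function.update w b (w b - 1) true + Function.update w b (w b - 1) false = m := by
      have := h0 true
      have := h0 false
      cases b <;> simp <;> omega
    obtain ⟨c, S, hSA, hS, hmono⟩ := ih _ A (by rw [hw']; omega) hw'
    by_cases hcb : c = b
    · subst hcb
      have hvS : v ∉ S := fun hvS => notMem_erase v V (filter_subset _ _ (hSA hvS))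
      refine ⟨c, insert v S, insert_subset hv (hSA.trans hAV), ?_, ?_⟩
      · rw [card_insert_of_notMem hvS, hS, Function.update_self]
        exact Nat.sub_add_cancel (Nat.one_le_iff_ne_zero.mpr (h0 c))
      · exact hmono.insert_of_forall_pair fun y hy => (mem_filter.mp (hSA hy)).2
    · exact ⟨c, S, hSA.trans hAV, by rw [hS, Function.update_of_ne hcb], hmono⟩

end Pairs

section EndHomogeneous

variable {α : Type*} [LinearOrder α] (χ : Finset α → Bool)

def EndHomogeneousOn (S U : Finset α) : Prop :=
  ∀ p ⊆ S, p.card = 2 → ∀ c ∈ U, ∀ d ∈ U, (∀ x ∈ p, x < c) → (∀ x ∈ p, x < d) →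
    χ (insert c p) = χ (insert d p)

variable {χ}

theorem endHomogeneousOn_empty (U : Finset α) : EndHomogeneousOn χ ∅ U := by
  intro p hp hcard
  simp [subset_empty.mp hp] at hcard

theorem EndHomogeneousOn.mono {S U U' : Finset α} (h : EndHomogeneousOn χ S U) (hU : U' ⊆ U) :
    EndHomogeneousOn χ S U' :=
  fun p hp hcard c hc d hd => h p hp hcard c (hU hc) d (hU hd)

theorem EndHomogeneousOn.exists_insert_min' {S V : Finset α} (hSV : ∀ s ∈ S, ∀ v ∈ V, s < v)
    (h : EndHomogeneousOn χ S (S ∪ V)) (hV : V.Nonempty) :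
    ∃ V' ⊆ V.erase (V.min' hV), V.card ≤ 2 ^ S.card * V'.card + 1 ∧
      EndHomogeneousOn χ (insert (V.min' hV) S) (insert (V.min' hV) S ∪ V') := by
  set x := V.min' hV
  have hx : x ∈ V := min'_mem V hV
  obtain ⟨b, hb⟩ := (V.erase x).exists_card_le_mul_card_filter_eq
    (fun y (a : S) => χ (insert y {x, a.1}))
  rw [Fintype.card_fun, Fintype.card_coe, Fintype.card_bool, card_erase_of_mem hx] at hb
  set V' := (V.erase x).filter (fun y => (fun a : S => χ (insert y {x, a.1})) = b)
  refine ⟨V', filter_subset _ _, by omega, ?_⟩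
  intro p hp hcard c hc d hd hpc hpd
  by_cases hxp : x ∈ p
  · obtain ⟨a, haS, rfl⟩ := exists_mem_eq_pair_of_subset_insert hxp hcard hp
    have mem_fiber : ∀ y ∈ insert x S ∪ V', x < y → y ∈ V' := by
      intro y hy hxy
      rcases mem_union.mp hy with hy | hy
      · rcases mem_insert.mp hy with hyx | hy
        · exact absurd (hyx ▸ hxy) (lt_irrefl x)
        · exact absurd (hSV y hy x hx) (lt_asymm hxy)
      · exact hy
    have hc' := (mem_filter.mp (mem_fiber c hc (hpc x hxp))).2
    have hd' := (mem_filter.mp (mem_fiber d hd (hpd x hxp))).2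
    exact congrFun (hc'.trans hd'.symm) ⟨a, haS⟩
  · have hU : insert x S ∪ V' ⊆ S ∪ V := by
      intro y hy
      rcases mem_union.mp hy with hy | hy
      · rcases mem_insert.mp hy with rfl | hy
        · exact mem_union_right S hx
        · exact mem_union_left V hy
      · exact mem_union_right S (mem_of_mem_erase (filter_subset _ _ hy))
    exact h p ((subset_insert_iff_of_notMem hxp).mp hp) hcard c (hU hc) d (hU hd) hpc hpd

theorem exists_endHomogeneousOn_of_two_pow_le (r : ℕ) {S V : Finset α}
    (hSV : ∀ s ∈ S, ∀ v ∈ V, s < v) (h : EndHomogeneousOn χ S (S ∪ V))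
    (hV : 2 ^ ((S.card + r) * r) ≤ V.card) : ∃ T, T.card = S.card + r ∧ EndHomogeneousOn χ T T := by
  induction r generalizing S V with
  | zero => exact ⟨S, rfl, h.mono subset_union_left⟩
  | succ r ih =>
    have hVne : V.Nonempty := card_pos.mp (lt_of_lt_of_le (Nat.two_pow_pos _) hV)
    obtain ⟨V', hV', hcard, h'⟩ := h.exists_insert_min' hSV hVne
    set x := V.min' hVne
    have hxS : x ∉ S := fun hxS => lt_irrefl x (hSV x hxS x (min'_mem V hVne))
    have hS'V' : ∀ s ∈ insert x S, ∀ v ∈ V', s < v := by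
      intro s hs v hv
      have hvx : v ≠ x := ne_of_mem_erase (hV' hv)
      have hvV : v ∈ V := mem_of_mem_erase (hV' hv)
      rcases mem_insert.mp hs with rfl | hs
      · exact lt_of_le_of_ne (min'_le V v hvV) hvx.symm
      · exact hSV s hs v hvV
    obtain ⟨T, hT, hTh⟩ := ih hS'V' h' (by
      rw [card_insert_of_notMem hxS]
      exact Nat.two_pow_le_of_two_pow_le_mul_add_one (hV.trans hcard))
    exact ⟨T, by rw [hT, card_insert_of_notMem hxS]; ring, hTh⟩

theorem EndHomogeneousOn.apply_eq_insert_max {T e : Finset α} {z : α}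
    (h : EndHomogeneousOn χ T T) (hz : z ∈ T) (he : e ⊆ T) (hez : ∀ y ∈ e, y < z)
    (hcard : e.card = 3) (hne : e.Nonempty) :
    χ e = χ (insert z (e.erase (e.max' hne))) := by
  have hmax := max'_mem e hne
  conv_lhs => rw [← insert_erase hmax]
  exact h _ ((erase_subset _ _).trans he) (by rw [card_erase_of_mem hmax, hcard]) _ (he hmax) _ hz
    (fun y hy => lt_of_le_of_ne (le_max' e y (mem_of_mem_erase hy)) (ne_of_mem_erase hy))
    (fun y hy => hez y (mem_of_mem_erase hy))

theorem exists_isMonochromatic_three_of_two_pow_le (χ : Finset α → Bool) (n : ℕ) (V : Finset α)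
    (hV : 2 ^ ((2 ^ (n + n) + 1) ^ 2) ≤ V.card) :
    ∃ c, ∃ S : Finset α, S.card = n ∧ IsMonochromatic χ 3 c S := by
  obtain ⟨T, hT, hTh⟩ := exists_endHomogeneousOn_of_two_pow_le (S := ∅) (2 ^ (n + n) + 1)
    (by simp) (endHomogeneousOn_empty (χ := χ) _) (by simpa [sq] using hV)
  have hTne : T.Nonempty := by rw [← card_pos, hT]; positivity
  set z := T.max' hTne
  obtain ⟨c, S, hST, hS, hmono⟩ := exists_isMonochromatic_two_of_two_pow_le
    (fun p => χ (insert z p)) (fun _ => n) (T.erase z)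
    (by rw [card_erase_of_mem (max'_mem T hTne), hT]; simp)
  refine ⟨c, S, hS, fun e he hcard => ?_⟩
  have hne : e.Nonempty := card_pos.mp (by omega)
  have heT : e ⊆ T.erase z := he.trans hST
  rw [hTh.apply_eq_insert_max (max'_mem T hTne) (heT.trans (erase_subset _ _))
    (fun y hy => lt_of_le_of_ne (le_max' T y (mem_of_mem_erase (heT hy)))
      (ne_of_mem_erase (heT hy)))
    hcard hne]
  exact hmono _ ((erase_subset _ _).trans he) (by rw [card_erase_of_mem (max'_mem e hne), hcard])

end EndHomogeneous

end Finset

theorem monoClique_three_of_two_pow_le {n N : ℕ} (hN : 2 ^ ((2 ^ (n + n) + 1) ^ 2) ≤ N)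
    (χ : Finset (Fin N) → Bool) : monoClique 3 χ true n ∨ monoClique 3 χ false n := by
  obtain ⟨c, S, hS, hmono⟩ := Finset.exists_isMonochromatic_three_of_two_pow_le χ n .univ
    (by simpa using hN)
  cases c
  · exact Or.inr ⟨S, hS, hmono⟩
  · exact Or.inl ⟨S, hS, hmono⟩

theorem ramsey_three_le (n : ℕ) : ramsey 3 n n ≤ 2 ^ ((2 ^ (n + n) + 1) ^ 2) :=
  Nat.sInf_le fun χ => monoClique_three_of_two_pow_le le_rfl χ

theorem card_filter_forall_mem_eq_mul_two_pow {ι : Type*} [Fintype ι] [DecidableEq ι]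
    (A : Finset ι) (c : Bool) :
    (Finset.univ.filter fun f : ι → Bool => ∀ i ∈ A, f i = c).card * 2 ^ A.card =
      2 ^ Fintype.card ι := by
  have hfilter : (Finset.univ.filter fun f : ι → Bool => ∀ i ∈ A, f i = c) =
      Fintype.piFinset fun i => if i ∈ A then {c} else Finset.univ := by
    ext f
    simp only [Finset.mem_filter, Finset.mem_univ, true_and, Fintype.mem_piFinset]
    refine ⟨fun h i => ?_, fun h i hi => by simpa [hi] using h i⟩
    split_ifs with hi
    · simp [h i hi]
    · exact Finset.mem_univ _
  rw [hfilter, Fintype.card_piFinset]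
  simp only [apply_ite Finset.card, Finset.card_singleton, Finset.card_univ, Fintype.card_bool]
  rw [Finset.prod_ite, Finset.prod_const_one, one_mul, Finset.prod_const, ← pow_add,
    Finset.filter_not, Finset.filter_univ_mem, ← Finset.compl_eq_univ_sdiff,
    Finset.card_compl_add_card]

theorem monoClique.of_comp_map {k M N n : ℕ} (f : Fin M ↪ Fin N) {χ : Finset (Fin N) → Bool}
    {c : Bool} (h : monoClique k (fun e => χ (e.map f)) c n) : monoClique k χ c n := by
  obtain ⟨S, hS, hmono⟩ := h
  refine ⟨S.map f, by rw [Finset.card_map, hS], fun e he hcard => ?_⟩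
  obtain ⟨u, hu, rfl⟩ := Finset.subset_map_iff.mp he
  exact hmono u hu (by rwa [Finset.card_map] at hcard)

theorem lt_ramsey_of_not_monoClique {k s n B : ℕ}
    (hne : ∃ N, ∀ χ : Finset (Fin N) → Bool, monoClique k χ true s ∨ monoClique k χ false n)
    (χ : Finset (Fin B) → Bool) (htrue : ¬ monoClique k χ true s)
    (hfalse : ¬ monoClique k χ false n) : B < ramsey k s n := by
  by_contra! hle
  rcases Nat.sInf_mem hne (fun e => χ (e.map (Fin.castLEEmb hle))) with h | h
  · exact htrue h.of_comp_map
  · exact hfalse h.of_comp_map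

theorem exists_not_monoClique_of_two_mul_choose_lt {k n B : ℕ}
    (h : 2 * B.choose n < 2 ^ n.choose k) :
    ∃ χ : Finset (Fin B) → Bool, ¬ monoClique k χ true n ∧ ¬ monoClique k χ false n := by
  classical
  let mono : Finset (Fin B) × Bool → Finset (Finset (Fin B) → Bool) := fun Sc =>
    Finset.univ.filter fun χ => ∀ e ∈ Sc.1.powersetCard k, χ e = Sc.2
  let I := (Finset.univ : Finset (Fin B)).powersetCard n ×ˢ (Finset.univ : Finset Bool)
  have hcover : ∀ χ c, monoClique k χ c n → χ ∈ I.biUnion mono := by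
    rintro χ c ⟨S, hS, hmono⟩
    refine Finset.mem_biUnion.mpr ⟨(S, c), ?_, ?_⟩
    · simp [I, hS]
    · simp only [mono, Finset.mem_filter, Finset.mem_univ, true_and, Finset.mem_powersetCard]
      exact fun e he => hmono e he.1 he.2
  have hcard : (I.biUnion mono).card < Fintype.card (Finset (Fin B) → Bool) := by
    rw [Fintype.card_fun, Fintype.card_bool]
    refine lt_of_mul_lt_mul_right (a := 2 ^ n.choose k) ?_ (Nat.zero_le _)
    calc (I.biUnion mono).card * 2 ^ n.choose k
        ≤ ∑ Sc ∈ I, (mono Sc).card * 2 ^ n.choose k :=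
          (Nat.mul_le_mul_right _ Finset.card_biUnion_le).trans_eq (Finset.sum_mul ..)
      _ = ∑ Sc ∈ I, 2 ^ Fintype.card (Finset (Fin B)) := by
          refine Finset.sum_congr rfl fun Sc hSc => ?_
          have hS : Sc.1.card = n := (Finset.mem_powersetCard.mp (Finset.mem_product.mp hSc).1).2
          rw [← card_filter_forall_mem_eq_mul_two_pow (Sc.1.powersetCard k) Sc.2,
            Finset.card_powersetCard, hS]
      _ = 2 * B.choose n * 2 ^ Fintype.card (Finset (Fin B)) := by
          simp [I, Finset.card_powersetCard, mul_comm]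
      _ < 2 ^ Fintype.card (Finset (Fin B)) * 2 ^ n.choose k := by
          rw [mul_comm (2 ^ _)]
          exact Nat.mul_lt_mul_of_pos_right h (Nat.two_pow_pos _)
  obtain ⟨χ, -, hχ⟩ := Finset.exists_mem_notMem_of_card_lt_card
    (hcard.trans_eq Finset.card_univ.symm)
  exact ⟨χ, fun h => hχ (hcover χ true h), fun h => hχ (hcover χ false h)⟩

theorem ceil_sq_div_mul_add_one_lt_choose_three {n : ℕ} (hn : 10 ≤ n) :
    ⌈(n : ℝ) ^ 2 / 100⌉₊ * n + 1 < n.choose 3 := by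
  have hceil := Nat.ceil_lt_add_one (by positivity : (0 : ℝ) ≤ (n : ℝ) ^ 2 / 100)
  have hchoose := Nat.pow_le_choose (α := ℝ) 3 n
  rw [Nat.cast_sub (by omega), Nat.factorial_succ, Nat.factorial_two] at hchoose
  have hn' : (10 : ℝ) ≤ n := by exact_mod_cast hn
  have : (⌈(n : ℝ) ^ 2 / 100⌉₊ * n + 1 : ℝ) < n.choose 3 := by
    push_cast at hchoose
    nlinarith [mul_lt_mul_of_pos_right hceil (by linarith : (0 : ℝ) < n)]
  exact_mod_cast this

theorem two_mul_choose_two_pow_lt {k n : ℕ} (h : k * n + 1 < n.choose 3) :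
    2 * (2 ^ k).choose n < 2 ^ n.choose 3 :=
  calc 2 * (2 ^ k).choose n ≤ 2 * (2 ^ k) ^ n := Nat.mul_le_mul_left 2 (Nat.choose_le_pow _ _)
    _ = 2 ^ (k * n + 1) := by rw [← pow_mul, pow_succ, mul_comm]
    _ < 2 ^ n.choose 3 := Nat.pow_lt_pow_right one_lt_two h

theorem two_pow_ceil_lt_ramsey_three {n : ℕ} (hn : 10 ≤ n) :
    2 ^ ⌈(n : ℝ) ^ 2 / 100⌉₊ < ramsey 3 n n := by
  obtain ⟨χ, htrue, hfalse⟩ := exists_not_monoClique_of_two_mul_choose_lt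
    (two_mul_choose_two_pow_lt (ceil_sq_div_mul_add_one_lt_choose_three hn))
  exact lt_ramsey_of_not_monoClique ⟨_, fun χ => monoClique_three_of_two_pow_le le_rfl χ⟩
    χ htrue hfalse

theorem sq_two_pow_add_one_lt_two_pow {n : ℕ} (hn : 3 ≤ n) : (2 ^ (n + n) + 1) ^ 2 < 2 ^ (5 * n) :=
  calc (2 ^ (n + n) + 1) ^ 2 ≤ (2 ^ (n + n + 1)) ^ 2 := by
        gcongr
        rw [pow_succ]
        have := Nat.one_le_two_pow (n := n + n)
        omega
    _ = 2 ^ (4 * n + 2) := by rw [← pow_mul]; ring_nf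
    _ < 2 ^ (5 * n) := Nat.pow_lt_pow_right one_lt_two (by omega)

theorem stmt_9 :
    ∃ c₁ c₂ : ℝ, 0 < c₁ ∧ 0 < c₂ ∧ ∀ᶠ n : ℕ in atTop,
      (2:ℝ) ^ (c₁ * (n:ℝ) ^ 2) < (ramsey 3 n n : ℝ) ∧
      (ramsey 3 n n : ℝ) < (2:ℝ) ^ ((2:ℝ) ^ (c₂ * n)) := by
  refine ⟨1 / 100, 5, by norm_num, by norm_num, ?_⟩
  filter_upwards [eventually_ge_atTop 10] with n hn
  constructor
  · set k := ⌈(n : ℝ) ^ 2 / 100⌉₊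
    calc (2 : ℝ) ^ (1 / 100 * (n : ℝ) ^ 2) ≤ (2 : ℝ) ^ (k : ℝ) :=
          Real.rpow_le_rpow_of_exponent_le one_le_two
            (by linarith [Nat.le_ceil ((n : ℝ) ^ 2 / 100)])
      _ = ((2 ^ k : ℕ) : ℝ) := by rw [Real.rpow_natCast]; push_cast; rfl
      _ < ramsey 3 n n := Nat.cast_lt.mpr (two_pow_ceil_lt_ramsey_three hn)
  · calc (ramsey 3 n n : ℝ) ≤ ((2 ^ ((2 ^ (n + n) + 1) ^ 2) : ℕ) : ℝ) := by
          exact_mod_cast ramsey_three_le n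
      _ < ((2 ^ 2 ^ (5 * n) : ℕ) : ℝ) := by
          exact_mod_cast Nat.pow_lt_pow_right one_lt_two (sq_two_pow_add_one_lt_two_pow (by omega))
      _ = (2 : ℝ) ^ ((2 : ℝ) ^ (5 * n : ℝ)) := by
          rw [← Nat.cast_ofNat (R := ℝ) (n := 5), ← Nat.cast_mul, Real.rpow_natCast,
            ← Nat.cast_ofNat (R := ℝ) (n := 2), ← Nat.cast_pow, Real.rpow_natCast]
          push_cast; rfl
end
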